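/- In the polynomial ring Z[x,y][s], set A20 = x^2 y − 3x^2 − 6xy + 12x + 6y − 10, B4 = x − 1, B8 = y − 1, and C25 = 3x^2 y − 6x^2 − 12xy + 20x + 10y − 15. Then (s−1)^3 divides s^3 (s−x)^2 (s−y) + C25·s^2 + (B4^2·B8 − A20 − C25)·s + A20. Equivalently, the rational function g(s) = s^3 (s−x)^2 (s−y) / (a(s^2 + s(d−e−1) + e)) with a = −C25, d = B4^2 B8 / C25, e = A20 / C25 satisfies g(1) = 1, g'(1) = 0, and g''(1) = 0 wherever the denominator is nonzero at s = 1. -/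
import Mathlib

open Polynomial

/-- The coefficient ring `ℤ[x,y]`. -/
abbrev R2Z : Type := MvPolynomial (Fin 2) ℤ

noncomputable def xx : R2Z := MvPolynomial.X 0
noncomputable def yy : R2Z := MvPolynomial.X 1

noncomputable def A20 : R2Z :=
  xx ^ 2 * yy - 3 * xx ^ 2 - 6 * xx * yy + 12 * xx + 6 * yy - 10
noncomputable def B4 : R2Z := xx - 1
noncomputable def B8 : R2Z := yy - 1
noncomputable def C25 : R2Z :=
  3 * xx ^ 2 * yy - 6 * xx ^ 2 - 12 * xx * yy + 20 * xx + 10 * yy - 15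

/-- With `A20 = x²y − 3x² − 6xy + 12x + 6y − 10`, `B4 = x − 1`, `B8 = y − 1`, and
`C25 = 3x²y − 6x² − 12xy + 20x + 10y − 15` in `ℤ[x,y]`, the polynomial
`s³(s−x)²(s−y) + C25·s² + (B4²·B8 − A20 − C25)·s + A20` in `ℤ[x,y][s]` is divisible by
`(s−1)³`. -/
theorem statement19 :
    ((X : R2Z[X]) - 1) ^ 3 ∣
      X ^ 3 * (X - C xx) ^ 2 * (X - C yy) + C C25 * X ^ 2
        + C (B4 ^ 2 * B8 - A20 - C25) * X + C A20 := by
  refine ⟨X ^ 3 + C (3 - yy - 2 * xx) * X ^ 2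
      + C (6 - 3 * yy - 6 * xx + 2 * xx * yy + xx ^ 2) * X
      + C (10 - 6 * yy - 12 * xx + 6 * xx * yy + 3 * xx ^ 2 - xx ^ 2 * yy), ?_⟩
  simp only [A20, B4, B8, C25, map_add, map_sub, map_mul, map_pow, map_ofNat,
    map_one, C_1]
  ring
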